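/- The classical value of the CHSH_n game is 1 − 1/(2n): for any functions f : {0,…,n−1} → Bool and g : {0,…,n−1} → Bool, the winning probability of the deterministic strategy (f,g) in CHSH_n is at most 1 − 1/(2n), and this bound is achieved by some pair (f,g). -/

import Mathlib

/-!
Read `Bool` as `ZMod 2`. A strategy winning all `2n` questions would satisfy
`f a - g a = [a = n - 1]` and `f a - g (a + 1) = 0` for every `a`. Summed over `a`, both
left-hand sides give `∑ f - ∑ g` (the shift `a ↦ a + 1` permutes `Fin n`), while the right-hand
sides give `1` and `0`. So every strategy loses at least one question, and the constant strategy
loses only `(n - 1, n - 1)`.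
-/

/-- Winning indicator of the deterministic strategy `(f,g)` in CHSH_n on
question pair `(a,b)`: win iff `f a ≠ g b` when `a = b = n-1`, and
`f a = g b` otherwise. -/
noncomputable def chshnDetWin (n : ℕ) (f g : Fin n → Bool) (a b : Fin n) : ℝ :=
  if a.val = n - 1 ∧ b.val = n - 1 then (if f a ≠ g b then 1 else 0)
  else (if f a = g b then 1 else 0)

open Finset

theorem Fintype.sum_le_two_mul_card_sub_one {ι : Type*} [Fintype ι] [DecidableEq ι]
    (t : ι → ℝ) (i₀ : ι) (ht : ∀ i, t i ≤ 2) (hi₀ : t i₀ ≤ 1) :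
    ∑ i, t i ≤ 2 * Fintype.card ι - 1 := by
  have hrest : ∑ i ∈ univ.erase i₀, t i ≤ 2 * (Fintype.card ι - 1 : ℕ) := by
    simpa [card_erase_of_mem (mem_univ i₀), mul_comm] using
      sum_le_card_nsmul (univ.erase i₀) t 2 (fun i _ => ht i)
  have hcard : 1 ≤ Fintype.card ι := Fintype.card_pos_iff.mpr ⟨i₀⟩
  rw [← add_sum_erase univ t (mem_univ i₀)]
  push_cast [hcard] at hrest
  linarith

theorem ZMod.natCast_toNat_sub_natCast_toNat (x y : Bool) :
    (x.toNat : ZMod 2) - y.toNat = if x = y then 0 else 1 := by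
  cases x <;> cases y <;> decide

theorem Fin.val_add_one_of_val_eq_sub_one {n : ℕ} [NeZero n] {a : Fin n} (ha : a.val = n - 1) :
    (a + 1).val = 0 := by
  rw [Fin.val_add, ha, Fin.val_one', Nat.add_mod_mod, Nat.sub_add_cancel NeZero.one_le, Nat.mod_self]

theorem Fin.sum_ite_val_eq_sub_one {n : ℕ} [NeZero n] {M : Type*} [AddCommMonoid M] (x y : M) :
    ∑ a : Fin n, (if a.val = n - 1 then x else y) = x + (n - 1) • y := by
  have hlast : ∀ a : Fin n, a.val = n - 1 ↔ a = ⟨n - 1, by have := NeZero.pos n; omega⟩ :=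
    fun a => by rw [Fin.ext_iff]
  simp only [hlast]
  rw [Fintype.sum_eq_add_sum_compl ⟨n - 1, _⟩, if_pos rfl,
    sum_congr rfl fun a ha => if_neg (by simpa using ha), Finset.sum_const, card_compl, card_singleton,
    Fintype.card_fin]

namespace CHSHn

variable {n : ℕ}

theorem chshnDetWin_self (f g : Fin n → Bool) (a : Fin n) :
    chshnDetWin n f g a a = if (f a ≠ g a ↔ a.val = n - 1) then 1 else 0 := by
  unfold chshnDetWin
  by_cases ha : a.val = n - 1 <;> simp [ha]

theorem chshnDetWin_add_one [NeZero n] (hn : 2 ≤ n) (f g : Fin n → Bool) (a : Fin n) :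
    chshnDetWin n f g a (a + 1) = if f a = g (a + 1) then 1 else 0 := by
  have : ¬ (a.val = n - 1 ∧ (a + 1).val = n - 1) := fun ⟨ha, ha'⟩ => by
    rw [Fin.val_add_one_of_val_eq_sub_one ha] at ha'
    omega
  rw [chshnDetWin, if_neg this]

theorem chshnDetWin_le_one (f g : Fin n → Bool) (a b : Fin n) : chshnDetWin n f g a b ≤ 1 := by
  unfold chshnDetWin
  split_ifs <;> norm_num

theorem not_forall_wins [NeZero n] (f g : Fin n → Bool) :
    ¬ ∀ a, (f a ≠ g a ↔ a.val = n - 1) ∧ f a = g (a + 1) := by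
  intro hwin
  set u : Fin n → ZMod 2 := fun a => (f a).toNat
  set v : Fin n → ZMod 2 := fun a => (g a).toNat
  have hdiag : ∀ a, u a - v a = if a.val = n - 1 then 1 else 0 := fun a => by
    simp only [u, v, ZMod.natCast_toNat_sub_natCast_toNat, ← (hwin a).1]
    by_cases h : f a = g a <;> simp [h]
  have hoff : ∀ a, u a - v (a + 1) = 0 := fun a => by
    simp only [u, v, ZMod.natCast_toNat_sub_natCast_toNat, (hwin a).2, if_true]
  have hshift : ∑ a, v (a + 1) = ∑ a, v a := Equiv.sum_comp (Equiv.addRight 1) v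
  have : (1 : ZMod 2) = 0 := calc
    (1 : ZMod 2) = ∑ a, (u a - v a) := by
      rw [sum_congr rfl fun a _ => hdiag a, Fin.sum_ite_val_eq_sub_one, smul_zero, add_zero]
    _ = ∑ a, (u a - v (a + 1)) := by simp only [sum_sub_distrib, hshift]
    _ = 0 := by simp [hoff]
  exact absurd this (by decide)

theorem exists_chshnDetWin_add_chshnDetWin_add_one_le_one [NeZero n] (hn : 2 ≤ n)
    (f g : Fin n → Bool) : ∃ a, chshnDetWin n f g a a + chshnDetWin n f g a (a + 1) ≤ 1 := by
  obtain ⟨a, ha⟩ := not_forall.mp (not_forall_wins f g)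
  refine ⟨a, ?_⟩
  rw [chshnDetWin_self, chshnDetWin_add_one hn]
  split_ifs with hdiag hoff
  exacts [absurd ⟨hdiag, hoff⟩ ha, by norm_num, by norm_num, by norm_num]

theorem sum_chshnDetWin_le [NeZero n] (hn : 2 ≤ n) (f g : Fin n → Bool) :
    ∑ a, (chshnDetWin n f g a a + chshnDetWin n f g a (a + 1)) ≤ 2 * n - 1 := by
  obtain ⟨a₀, ha₀⟩ := exists_chshnDetWin_add_chshnDetWin_add_one_le_one hn f g
  have hle : ∀ a, chshnDetWin n f g a a + chshnDetWin n f g a (a + 1) ≤ 2 := fun a => by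
    linarith [chshnDetWin_le_one f g a a, chshnDetWin_le_one f g a (a + 1)]
  simpa using Fintype.sum_le_two_mul_card_sub_one _ a₀ hle ha₀

theorem sum_chshnDetWin_const_false [NeZero n] (hn : 2 ≤ n) :
    ∑ a : Fin n, (chshnDetWin n (fun _ => false) (fun _ => false) a a +
      chshnDetWin n (fun _ => false) (fun _ => false) a (a + 1)) = 2 * n - 1 := by
  have hterm : ∀ a : Fin n, chshnDetWin n (fun _ => false) (fun _ => false) a a +
      chshnDetWin n (fun _ => false) (fun _ => false) a (a + 1) =
        if a.val = n - 1 then 1 else 2 := fun a => by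
    rw [chshnDetWin_self, chshnDetWin_add_one hn]
    by_cases ha : a.val = n - 1 <;> norm_num [ha]
  rw [sum_congr rfl fun a _ => hterm a, Fin.sum_ite_val_eq_sub_one, nsmul_eq_mul,
    Nat.cast_sub NeZero.one_le]
  ring

end CHSHn

theorem chshn_classical_value (n : ℕ) (hn : 2 ≤ n) [NeZero n] :
    (∀ f g : Fin n → Bool,
      (1 / (2 * n) : ℝ) * ∑ a : Fin n,
        (chshnDetWin n f g a a + chshnDetWin n f g a (a + 1)) ≤ 1 - 1 / (2 * n)) ∧
    (∃ f g : Fin n → Bool,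
      (1 / (2 * n) : ℝ) * ∑ a : Fin n,
        (chshnDetWin n f g a a + chshnDetWin n f g a (a + 1)) = 1 - 1 / (2 * n)) := by
  have hnorm : (1 / (2 * n) : ℝ) * (2 * n - 1) = 1 - 1 / (2 * n) := by
    field_simp
  refine ⟨fun f g => ?_, ⟨_, _, by rw [CHSHn.sum_chshnDetWin_const_false hn, hnorm]⟩⟩
  rw [← hnorm]
  exact mul_le_mul_of_nonneg_left (CHSHn.sum_chshnDetWin_le hn f g) (by positivity)
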